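/- Mean photon number of the imperfect cubic phase state: with ψ_s as in Eq. (14), N_S := (1/4)∫(|2ψ_s'(q)|² + q²|ψ_s(q)|²) dq - 1/2 equals (1/2)(cosh(2s) - 1) + 18γ²e^{4s} + (1/4)(P + 6γe^{2s})². -/

import Mathlib

open MeasureTheory Real Complex

noncomputable def cubicPhaseWF (γ P s : ℝ) (q : ℝ) : ℂ :=
  ((2 * Real.pi * Real.exp (2 * s)) ^ (-(1 / 4 : ℝ)) : ℝ) *
    Complex.exp (Complex.I * γ * q ^ 3 - q ^ 2 / (4 * Real.exp (2 * s))
      + Complex.I * P * q / 2)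

/-!
Since `|ψ_s|²` is the centred Gaussian density of variance `e^{2s}` and
`|2ψ_s'(q)|² = ((6γq² + P)² + q²e^{-4s}) |ψ_s(q)|²`, the integrand is an even quartic polynomial
times that density. Its integral is then read off from the Gaussian moments `⟨q²⟩ = e^{2s}` and
`⟨q⁴⟩ = 3e^{4s}`, both instances of `∫ x^{2k} e^{-bx²} dx = Γ(k + 1/2) / b^{k + 1/2}`.
-/

open ProbabilityTheory
open scoped NNReal

lemma integrable_pow_mul_exp_neg_mul_sq {b : ℝ} (hb : 0 < b) (n : ℕ) :
    Integrable fun x : ℝ => x ^ n * rexp (-b * x ^ 2) := by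
  simpa [Real.rpow_natCast] using
    integrable_rpow_mul_exp_neg_mul_sq hb (s := n) (neg_one_lt_zero.trans_le n.cast_nonneg)

lemma integral_pow_mul_exp_neg_mul_sq_of_even {b : ℝ} (hb : 0 < b) {n : ℕ} (hn : Even n) :
    ∫ x : ℝ, x ^ n * rexp (-b * x ^ 2) = b ^ (-((n : ℝ) + 1) / 2) * Real.Gamma ((n + 1) / 2) := by
  have half_line : ∫ x in Set.Ioi (0 : ℝ), x ^ n * rexp (-b * x ^ 2)
      = b ^ (-((n : ℝ) + 1) / 2) * (1 / 2) * Real.Gamma ((n + 1) / 2) := by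
    simpa [Real.rpow_natCast] using integral_rpow_mul_exp_neg_mul_rpow (p := 2) (q := n)
      two_pos (neg_one_lt_zero.trans_le n.cast_nonneg) hb
  calc ∫ x : ℝ, x ^ n * rexp (-b * x ^ 2)
      = ∫ x : ℝ, |x| ^ n * rexp (-b * |x| ^ 2) := by simp [hn.pow_abs]
    _ = _ := by rw [integral_comp_abs (f := fun x => x ^ n * rexp (-b * x ^ 2)), half_line]; ring

lemma gaussianPDFReal_zero_eq_mul_exp (v : ℝ≥0) (x : ℝ) :
    gaussianPDFReal 0 v x = (√(2 * π * v))⁻¹ * rexp (-(2 * v : ℝ)⁻¹ * x ^ 2) := by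
  rw [gaussianPDFReal, sub_zero, neg_div, div_eq_inv_mul, neg_mul]

lemma integrable_pow_mul_gaussianPDFReal_zero {v : ℝ≥0} (hv : v ≠ 0) (n : ℕ) :
    Integrable fun x => x ^ n * gaussianPDFReal 0 v x := by
  have hb : 0 < (2 * v : ℝ)⁻¹ := by positivity
  simpa [gaussianPDFReal_zero_eq_mul_exp, mul_left_comm] using
    (integrable_pow_mul_exp_neg_mul_sq hb n).const_mul (√(2 * π * v))⁻¹

lemma integral_pow_mul_gaussianPDFReal_zero {v : ℝ≥0} (hv : v ≠ 0) (k : ℕ) :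
    ∫ x, x ^ (2 * k) * gaussianPDFReal 0 v x = (2 * v) ^ k * Real.Gamma (k + 1 / 2) / √π := by
  have hv' : (0 : ℝ) < 2 * v := by positivity
  simp_rw [gaussianPDFReal_zero_eq_mul_exp, mul_left_comm _ (√(2 * π * v))⁻¹]
  rw [integral_const_mul, integral_pow_mul_exp_neg_mul_sq_of_even (inv_pos.2 hv') (even_two_mul k)]
  push_cast
  rw [inv_rpow hv'.le, ← rpow_neg hv'.le, neg_div, neg_neg,
    show ((2 * k + 1) / 2 : ℝ) = k + 1 / 2 by ring, rpow_add hv', rpow_natCast, ← sqrt_eq_rpow,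
    show (2 * π * v : ℝ) = 2 * v * π by ring, sqrt_mul hv'.le]
  field_simp

lemma integral_quartic_mul_gaussianPDFReal_zero {v : ℝ≥0} (hv : v ≠ 0) (a c d : ℝ) :
    ∫ x, (a * x ^ 4 + c * x ^ 2 + d) * gaussianPDFReal 0 v x = 3 * a * v ^ 2 + c * v + d := by
  have hπ : √π ≠ 0 := (sqrt_pos.2 pi_pos).ne'
  have second : ∫ x, x ^ 2 * gaussianPDFReal 0 v x = v := by
    have := integral_pow_mul_gaussianPDFReal_zero hv 1
    rw [show (1 : ℕ) + (1 / 2 : ℝ) = 1 / 2 + 1 by norm_num, Real.Gamma_add_one (by norm_num),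
      Real.Gamma_one_half_eq] at this
    rw [this]
    field_simp
  have fourth : ∫ x, x ^ 4 * gaussianPDFReal 0 v x = 3 * v ^ 2 := by
    have := integral_pow_mul_gaussianPDFReal_zero hv 2
    rw [show (2 : ℕ) + (1 / 2 : ℝ) = 1 / 2 + 1 + 1 by norm_num, Real.Gamma_add_one (by norm_num),
      Real.Gamma_add_one (by norm_num), Real.Gamma_one_half_eq] at this
    rw [this]
    field_simp
    ring
  have h4 := (integrable_pow_mul_gaussianPDFReal_zero hv 4).const_mul a
  have h2 := (integrable_pow_mul_gaussianPDFReal_zero hv 2).const_mul c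
  have h0 := (integrable_gaussianPDFReal 0 v).const_mul d
  simp_rw [add_mul, mul_assoc]
  rw [integral_add (h4.fun_add h2) h0, integral_add h4 h2, integral_const_mul, integral_const_mul,
    integral_const_mul, fourth, second, integral_gaussianPDFReal_eq_one 0 hv]
  ring

lemma hasDerivAt_cubicPhaseWF (γ P s q : ℝ) :
    HasDerivAt (cubicPhaseWF γ P s)
      (cubicPhaseWF γ P s q * (I * (3 * γ * q ^ 2 + P / 2) - q / (2 * rexp (2 * s)))) q := by
  have phase := (((hasDerivAt_pow 3 (q : ℂ)).const_mul (I * γ)).sub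
    ((hasDerivAt_pow 2 (q : ℂ)).div_const (4 * rexp (2 * s)))).add
    (((hasDerivAt_id (q : ℂ)).const_mul (I * P)).div_const 2)
  have := (phase.cexp.const_mul
    (((2 * π * rexp (2 * s)) ^ (-(1 / 4 : ℝ)) : ℝ) : ℂ)).comp_ofReal
  refine this.congr_deriv ?_
  simp only [cubicPhaseWF, Pi.add_apply, Pi.sub_apply, id]
  field_simp
  ring

lemma sq_norm_cubicPhaseWF (γ P s q : ℝ) :
    ‖cubicPhaseWF γ P s q‖ ^ 2 = gaussianPDFReal 0 (rexp (2 * s)).toNNReal q := by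
  have hE := exp_pos (2 * s)
  have re_phase : (I * γ * q ^ 3 - q ^ 2 / (4 * rexp (2 * s)) + I * P * q / 2 : ℂ).re
      = -q ^ 2 / (4 * rexp (2 * s)) := by
    rw [show (I * γ * q ^ 3 - q ^ 2 / (4 * rexp (2 * s)) + I * P * q / 2 : ℂ)
        = ((-q ^ 2 / (4 * rexp (2 * s)) : ℝ) : ℂ) + ((γ * q ^ 3 + P * q / 2 : ℝ) : ℂ) * I by
      push_cast; ring]
    simp only [add_re, mul_re, ofReal_re, ofReal_im, I_re, I_im]
    ring
  have amplitude_sq :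
      ((2 * π * rexp (2 * s)) ^ (-(1 / 4 : ℝ))) ^ 2 = (√(2 * π * rexp (2 * s)))⁻¹ := by
    rw [← rpow_natCast, ← rpow_mul (by positivity), sqrt_eq_rpow, ← rpow_neg (by positivity)]
    norm_num
  rw [cubicPhaseWF, norm_mul, Complex.norm_exp, re_phase, Complex.norm_real,
    Real.norm_of_nonneg (by positivity), mul_pow, amplitude_sq, ← Real.exp_nat_mul, gaussianPDFReal,
    Real.coe_toNNReal _ hE.le]
  congr 2
  field_simp
  ring

lemma sq_norm_two_mul_deriv_cubicPhaseWF (γ P s q : ℝ) :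
    ‖2 * deriv (cubicPhaseWF γ P s) q‖ ^ 2
      = ((6 * γ * q ^ 2 + P) ^ 2 + (q / rexp (2 * s)) ^ 2) * ‖cubicPhaseWF γ P s q‖ ^ 2 := by
  have h : 2 * (I * (3 * γ * q ^ 2 + P / 2) - q / (2 * rexp (2 * s)))
      = ((-(q / rexp (2 * s)) : ℝ) : ℂ) + ((6 * γ * q ^ 2 + P : ℝ) : ℂ) * I := by
    push_cast
    field_simp
    ring
  rw [(hasDerivAt_cubicPhaseWF γ P s q).deriv, mul_left_comm, h, norm_mul, mul_pow,
    Complex.sq_norm (_ + _ * I), normSq_add_mul_I]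
  ring

theorem cubic_phase_mean_photon_number (γ P s : ℝ) :
    (1 / 4) * (∫ q : ℝ, ‖(2 : ℂ) * deriv (cubicPhaseWF γ P s) q‖ ^ 2
        + q ^ 2 * ‖cubicPhaseWF γ P s q‖ ^ 2) - 1 / 2
      = (1 / 2) * (Real.cosh (2 * s) - 1) + 18 * γ ^ 2 * Real.exp (4 * s)
        + (1 / 4) * (P + 6 * γ * Real.exp (2 * s)) ^ 2 := by
  have hE := exp_pos (2 * s)
  have integrand (q : ℝ) : ‖(2 : ℂ) * deriv (cubicPhaseWF γ P s) q‖ ^ 2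
      + q ^ 2 * ‖cubicPhaseWF γ P s q‖ ^ 2
      = (36 * γ ^ 2 * q ^ 4 + (12 * γ * P + (rexp (2 * s))⁻¹ ^ 2 + 1) * q ^ 2 + P ^ 2)
        * gaussianPDFReal 0 (rexp (2 * s)).toNNReal q := by
    rw [sq_norm_two_mul_deriv_cubicPhaseWF, sq_norm_cubicPhaseWF]
    ring
  rw [integral_congr_ae (.of_forall integrand),
    integral_quartic_mul_gaussianPDFReal_zero (Real.toNNReal_pos.2 hE).ne',
    Real.coe_toNNReal _ hE.le, cosh_eq, Real.exp_neg, show 4 * s = 2 * s + 2 * s by ring,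
    Real.exp_add]
  field_simp
  ring
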